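/- arXiv:1804.11012 — 2 statements merged into one kernel-verified Lean document; each statement's English description precedes it below -/
import Mathlib

section
/- Let λ ≥ 1 and let the shear rate γ̇ > 0. Set τ = (π/(2γ̇))(λ + 1/λ) and define the Jeffery orientation angle φ(t) = arctan((1/λ)·tan(λγ̇t/(λ² + 1))). Then the time-averaged two-dimensional order parameter over one quarter period satisfies (1/τ)·∫₀^τ (2·cos²(φ(t)) − 1) dt = (λ − 1)/(λ + 1). -/
/-!
With the phase `θ = λγ̇t/(λ²+1)`, the time average over `[0, τ]` is the average over
`θ ∈ [0, π/2]`. Writing `x = 2θ`, the order parameter `cos 2φ` of the orbit `tan φ = tan θ / λ`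
is the real part of the Möbius map `z ↦ ((λ+1)z + (λ-1)) / ((λ+1) + (λ-1)z)` at `z = e^{ix}`.
This map is holomorphic on the closed unit disc, so by the mean value property its average over
the unit circle is its value `(λ-1)/(λ+1)` at the centre; the symmetry `x ↦ 2π - x` reduces the
circle to the half-period `x ∈ [0, π]`.
-/

open Real MeasureTheory

theorem intervalIntegral.integral_zero_two_mul_of_symmetric {f : ℝ → ℝ} {a : ℝ}
    (hf : ∀ x, f (2 * a - x) = f x) (hint : IntervalIntegrable f volume 0 (2 * a)) :
    ∫ x in 0..2 * a, f x = 2 * ∫ x in 0..a, f x := by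
  have ha : a ∈ Set.uIcc 0 (2 * a) := by
    rcases le_total 0 a with h | h
    · exact Set.mem_uIcc_of_le h (by linarith)
    · exact Set.mem_uIcc_of_ge (by linarith) h
  have hlow := hint.mono_set (Set.uIcc_subset_uIcc Set.left_mem_uIcc ha)
  have hupp := hint.mono_set (Set.uIcc_subset_uIcc ha Set.right_mem_uIcc)
  have hreflect : ∫ x in a..2 * a, f x = ∫ x in 0..a, f x :=
    calc ∫ x in a..2 * a, f x = ∫ x in a..2 * a, f (2 * a - x) :=
          integral_congr fun x _ ↦ (hf x).symm
      _ = ∫ x in 0..a, f x := by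
          rw [integral_comp_sub_left f]
          congr 1 <;> ring
  rw [← integral_add_adjacent_intervals hlow hupp, hreflect, two_mul]

/-- The order parameter `2 cos² φ - 1` of the Jeffery orbit `tan φ = tan θ / l`, as a function of
the doubled phase `x = 2θ`. -/
noncomputable def jefferyOrderParameter (l x : ℝ) : ℝ :=
  ((l ^ 2 - 1) + (l ^ 2 + 1) * cos x) / ((l ^ 2 + 1) + (l ^ 2 - 1) * cos x)

lemma two_mul_cos_sq_arctan_tan_sub_one {l θ : ℝ} (hl : l ≠ 0) (hθ : cos θ ≠ 0) :
    2 * cos (arctan (1 / l * tan θ)) ^ 2 - 1 = jefferyOrderParameter l (2 * θ) := by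
  have hpy := sin_sq_add_cos_sq θ
  have hdenom : (l ^ 2 + 1) + (l ^ 2 - 1) * (2 * cos θ ^ 2 - 1)
      = 2 * (l ^ 2 * cos θ ^ 2 + sin θ ^ 2) := by
    linear_combination (-2) * hpy
  rw [cos_sq_arctan, tan_eq_sin_div_cos, jefferyOrderParameter, cos_two_mul, hdenom]
  field_simp
  linear_combination (-2) * hpy

lemma jefferyOrderParameter_denom_pos {l : ℝ} (hl : 0 < l) (x : ℝ) :
    0 < (l ^ 2 + 1) + (l ^ 2 - 1) * cos x := by
  have h : 0 ≤ l ^ 2 * (1 + cos x) := mul_nonneg (sq_nonneg l) (by linarith [neg_one_le_cos x])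
  rcases (cos_le_one x).lt_or_eq with hlt | heq
  · nlinarith
  · rw [heq]
    nlinarith

lemma continuous_jefferyOrderParameter {l : ℝ} (hl : 0 < l) :
    Continuous (jefferyOrderParameter l) :=
  Continuous.div (by fun_prop) (by fun_prop) fun x ↦ (jefferyOrderParameter_denom_pos hl x).ne'

noncomputable def jefferyMobius (l : ℝ) (z : ℂ) : ℂ :=
  ((l + 1) * z + (l - 1)) / ((l + 1) + (l - 1) * z)

lemma jefferyMobius_denom_ne_zero {l : ℝ} (hl : 0 < l) {z : ℂ} (hz : ‖z‖ ≤ 1) :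
    (l + 1 : ℂ) + (l - 1) * z ≠ 0 := by
  intro h
  have hlt : ‖((l : ℂ) - 1) * z‖ < ‖(l + 1 : ℂ)‖ := by
    have hsub : ‖(l : ℂ) - 1‖ = |l - 1| := by exact_mod_cast Complex.norm_real (l - 1)
    have hadd : ‖(l : ℂ) + 1‖ = |l + 1| := by exact_mod_cast Complex.norm_real (l + 1)
    rw [norm_mul, hsub, hadd, abs_of_pos (by linarith : 0 < l + 1)]
    calc |l - 1| * ‖z‖ ≤ |l - 1| * 1 := by gcongr
      _ < l + 1 := by rw [mul_one, abs_lt]; constructor <;> linarith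
  rw [eq_neg_of_add_eq_zero_right h, norm_neg] at hlt
  exact lt_irrefl _ hlt

lemma diffContOnCl_jefferyMobius {l : ℝ} (hl : 0 < l) :
    DiffContOnCl ℂ (jefferyMobius l) (Metric.ball 0 1) := by
  refine DifferentiableOn.diffContOnCl fun z hz ↦ DifferentiableAt.differentiableWithinAt ?_
  rw [closure_ball _ one_ne_zero, mem_closedBall_zero_iff] at hz
  exact (by fun_prop : Differentiable ℂ fun z : ℂ ↦ (l + 1 : ℂ) * z + (l - 1)).differentiableAt.div
    (by fun_prop) (jefferyMobius_denom_ne_zero hl hz)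

lemma jefferyMobius_circleMap_re (l x : ℝ) :
    (jefferyMobius l (circleMap 0 1 x)).re = jefferyOrderParameter l x := by
  have hpy := sin_sq_add_cos_sq x
  simp only [jefferyMobius, jefferyOrderParameter, circleMap_zero, Complex.div_re,
    Complex.normSq_apply, Complex.ofReal_one, one_mul, Complex.exp_ofReal_mul_I_re,
    Complex.exp_ofReal_mul_I_im, Complex.add_re, Complex.add_im, Complex.mul_re, Complex.mul_im,
    Complex.sub_re, Complex.sub_im, Complex.ofReal_re, Complex.ofReal_im, Complex.one_re,
    Complex.one_im]
  rw [← add_div]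
  convert mul_div_mul_left (l ^ 2 - 1 + (l ^ 2 + 1) * cos x) (l ^ 2 + 1 + (l ^ 2 - 1) * cos x)
    (two_ne_zero' ℝ) using 2
  · linear_combination (l ^ 2 - 1) * hpy
  · linear_combination (l - 1) ^ 2 * hpy

theorem integral_jefferyOrderParameter_zero_two_pi {l : ℝ} (hl : 0 < l) :
    ∫ x in 0..2 * π, jefferyOrderParameter l x = 2 * π * ((l - 1) / (l + 1)) := by
  have hM := diffContOnCl_jefferyMobius hl
  have hint : CircleIntegrable (jefferyMobius l) 0 1 :=
    (hM.continuousOn.mono (by simp [closure_ball, Metric.sphere_subset_closedBall])).circleIntegrable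
      zero_le_one
  have hmean : circleAverage (jefferyMobius l) 0 1 = ((l - 1) / (l + 1) : ℝ) := by
    rw [DiffContOnCl.circleAverage (R := 1) (by rwa [abs_one])]
    simp [jefferyMobius]
  have hre := Complex.reCLM.circleAverage_comp_comm hint
  rw [hmean, Complex.reCLM_apply, Complex.ofReal_re, circleAverage_def] at hre
  simp only [Function.comp_def, Complex.reCLM_apply, jefferyMobius_circleMap_re,
    smul_eq_mul] at hre
  rw [← hre]
  field_simp

theorem integral_jefferyOrderParameter_zero_pi {l : ℝ} (hl : 0 < l) :
    ∫ x in 0..π, jefferyOrderParameter l x = π * ((l - 1) / (l + 1)) := by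
  have h := intervalIntegral.integral_zero_two_mul_of_symmetric (a := π)
    (fun x ↦ by simp only [jefferyOrderParameter, cos_two_pi_sub])
    ((continuous_jefferyOrderParameter hl).intervalIntegrable _ _)
  rw [integral_jefferyOrderParameter_zero_two_pi hl] at h
  linarith

/-- The time-averaged two-dimensional order parameter of a Jeffery orbit
`φ(t) = arctan((1/λ) tan(λ γ̇ t/(λ²+1)))` over `τ = (π/(2γ̇))(λ + 1/λ)`
equals `(λ-1)/(λ+1)`. -/
theorem jeffery_time_averaged_order_parameter (l g : ℝ) (hl : 1 ≤ l) (hg : 0 < g) :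
    (1 / ((π / (2 * g)) * (l + 1 / l))) *
      ∫ t in (0:ℝ)..((π / (2 * g)) * (l + 1 / l)),
        (2 * (Real.cos (Real.arctan ((1 / l) * Real.tan (l * g * t / (l ^ 2 + 1))))) ^ 2 - 1)
      = (l - 1) / (l + 1) := by
  have hl0 : 0 < l := by linarith
  set τ := π / (2 * g) * (l + 1 / l) with hτ
  set ω := 2 * (l * g / (l ^ 2 + 1)) with hω
  have hτpos : 0 < τ := by positivity
  have hωpos : 0 < ω := by positivity
  have hωτ : ω * τ = π := by
    rw [hω, hτ]
    field_simp
  -- At `t = τ` the identity fails (Mathlib's `tan (π / 2)` is `0`), but that is a null set.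
  have hphase : ∫ t in 0..τ, 2 * cos (arctan (1 / l * tan (l * g * t / (l ^ 2 + 1)))) ^ 2 - 1
      = ∫ t in 0..τ, jefferyOrderParameter l (ω * t) := by
    refine intervalIntegral.integral_congr_ae ?_
    filter_upwards [volume.ae_ne τ] with t hne ht
    rw [Set.uIoc_of_le hτpos.le] at ht
    have hθ : l * g * t / (l ^ 2 + 1) = ω * t / 2 := by rw [hω]; ring
    have hωt : ω * t < π := hωτ ▸ mul_lt_mul_of_pos_left (lt_of_le_of_ne ht.2 hne) hωpos
    have hcos : cos (ω * t / 2) ≠ 0 :=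
      (cos_pos_of_mem_Ioo ⟨by nlinarith [pi_pos, mul_pos hωpos ht.1], by linarith⟩).ne'
    rw [hθ, two_mul_cos_sq_arctan_tan_sub_one hl0.ne' hcos, mul_div_cancel₀ _ two_ne_zero]
  rw [hphase, intervalIntegral.integral_comp_mul_left _ hωpos.ne', mul_zero, hωτ,
    integral_jefferyOrderParameter_zero_pi hl0, smul_eq_mul, ← hωτ]
  field_simp
end

section
/- Let x : ℝ → ℝ² be a twice continuously differentiable arclength-parametrized curve (|x'(s)| = 1 for all s), let t(s) = x'(s) be the unit tangent, n(s) = (x'₂(s), −x'₁(s)) the unit normal, and κ(s₀) = x''(s₀)·n(s₀) the signed curvature at a parameter value s₀. Define the double-layer kernel K(p, σ) = (1/π)·(((p − x(σ))·n(σ))/|p − x(σ)|²)·(((p − x(σ)) ⊗ (p − x(σ)))/|p − x(σ)|²) as a 2×2 matrix. Then lim_{σ → s₀} K(x(s₀), σ) = (κ(s₀)/(2π))·(t(s₀) ⊗ t(s₀)). -/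
open Real Filter Matrix

/-- the 2D Stokes double-layer kernel
`K(p, σ) = (1/π) ((r·n(σ))/ρ²) ((r ⊗ r)/ρ²)` as a `2 × 2` matrix, where
`r = p − x(σ)`, `ρ = |r|`, and `n(σ) = (x'₂(σ), −x'₁(σ))` is the unit normal -/
noncomputable def dlKernel (x : ℝ → ℝ × ℝ) (p : ℝ × ℝ) (σ : ℝ) :
    Matrix (Fin 2) (Fin 2) ℝ :=
  ((1 / π) *
      (((p.1 - (x σ).1) * (deriv x σ).2 + (p.2 - (x σ).2) * (-(deriv x σ).1)) /
        ((p.1 - (x σ).1) ^ 2 + (p.2 - (x σ).2) ^ 2)) *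
      (1 / ((p.1 - (x σ).1) ^ 2 + (p.2 - (x σ).2) ^ 2))) •
    !![(p.1 - (x σ).1) * (p.1 - (x σ).1), (p.1 - (x σ).1) * (p.2 - (x σ).2);
       (p.2 - (x σ).2) * (p.1 - (x σ).1), (p.2 - (x σ).2) * (p.2 - (x σ).2)]

/-!
Write `r = x(s₀) - x(σ)`, `h = σ - s₀` and `q = (x(σ) - x(s₀)) / h`, so that `r = -h q`.
Substituting `r = -h q` in every factor but `r·n(σ)`, away from the diagonal
`K(x(s₀), σ) = (1/π) (r·n(σ) / h²) |q|⁻⁴ q ⊗ q`. As `σ → s₀`, `q → t(s₀)` with `|t(s₀)| = 1`,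
and `r·n(σ) / h² → κ(s₀)/2` by L'Hôpital: since `t ⊥ n`, the derivative of `r·n(σ)` is
`r·n'(σ)`, and `r·n'(σ) / (2h) → -t(s₀)·n'(s₀) / 2 = κ(s₀)/2`.
-/

open Topology

theorem sub_eq_smul_slope {k E : Type*} [Field k] [AddCommGroup E] [Module k E] (f : k → E)
    (a b : k) : f a - f b = (a - b) • slope f a b := by
  rw [← neg_sub b a, neg_smul, sub_smul_slope, vsub_eq_sub, neg_sub]

namespace PlaneCurve

def dot (u v : ℝ × ℝ) : ℝ := u.1 * v.1 + u.2 * v.2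

def normal (v : ℝ × ℝ) : ℝ × ℝ := (v.2, -v.1)

def outer (u v : ℝ × ℝ) : Matrix (Fin 2) (Fin 2) ℝ :=
  !![u.1 * v.1, u.1 * v.2; u.2 * v.1, u.2 * v.2]

theorem dot_normal_self (v : ℝ × ℝ) : dot v (normal v) = 0 := by
  simp only [dot, normal]; ring

theorem dot_neg_left (u v : ℝ × ℝ) : dot (-u) v = -dot u v := by
  simp only [dot, Prod.fst_neg, Prod.snd_neg]; ring

theorem dot_normal_comm (u v : ℝ × ℝ) : dot u (normal v) = -dot v (normal u) := by
  simp only [dot, normal]; ring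

theorem dot_smul_left (a : ℝ) (u v : ℝ × ℝ) : dot (a • u) v = a * dot u v := by
  simp only [dot, Prod.smul_fst, Prod.smul_snd, smul_eq_mul]; ring

theorem dot_smul_right (a : ℝ) (u v : ℝ × ℝ) : dot u (a • v) = a * dot u v := by
  simp only [dot, Prod.smul_fst, Prod.smul_snd, smul_eq_mul]; ring

theorem outer_smul_smul (a b : ℝ) (u v : ℝ × ℝ) : outer (a • u) (b • v) = (a * b) • outer u v := by
  ext i j
  fin_cases i <;> fin_cases j <;> simp [outer] <;> ring

theorem continuous_dot : Continuous fun p : (ℝ × ℝ) × (ℝ × ℝ) => dot p.1 p.2 := by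
  unfold dot; fun_prop

theorem continuous_normal : Continuous normal := by
  unfold normal; fun_prop

theorem continuous_outer : Continuous fun p : (ℝ × ℝ) × (ℝ × ℝ) => outer p.1 p.2 := by
  refine continuous_matrix fun i j => ?_
  fin_cases i <;> fin_cases j <;> simp [outer] <;> fun_prop

end PlaneCurve

open PlaneCurve

section Deriv

variable {f g : ℝ → ℝ × ℝ} {f' g' : ℝ × ℝ} {s : ℝ}

theorem HasDerivAt.fst (hf : HasDerivAt f f' s) : HasDerivAt (fun σ => (f σ).1) f'.1 s := by
  simpa using hf.hasFDerivAt.fst.hasDerivAt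

theorem HasDerivAt.snd (hf : HasDerivAt f f' s) : HasDerivAt (fun σ => (f σ).2) f'.2 s := by
  simpa using hf.hasFDerivAt.snd.hasDerivAt

theorem HasDerivAt.dot (hf : HasDerivAt f f' s) (hg : HasDerivAt g g' s) :
    HasDerivAt (fun σ => dot (f σ) (g σ)) (dot f' (g s) + dot (f s) g') s := by
  refine ((hf.fst.mul hg.fst).add (hf.snd.mul hg.snd)).congr_deriv ?_
  simp only [PlaneCurve.dot]; ring

theorem HasDerivAt.normal (hf : HasDerivAt f f' s) :
    HasDerivAt (fun σ => normal (f σ)) (normal f') s :=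
  hf.snd.prodMk hf.fst.neg

end Deriv

section Limits

variable {α : Type*} {l : Filter α} {f g : α → ℝ × ℝ} {u v : ℝ × ℝ}

theorem Filter.Tendsto.dot (hf : Tendsto f l (𝓝 u)) (hg : Tendsto g l (𝓝 v)) :
    Tendsto (fun a => dot (f a) (g a)) l (𝓝 (dot u v)) :=
  (continuous_dot.tendsto _).comp (hf.prodMk_nhds hg)

theorem Filter.Tendsto.normal (hf : Tendsto f l (𝓝 u)) :
    Tendsto (fun a => normal (f a)) l (𝓝 (normal u)) :=
  (continuous_normal.tendsto _).comp hf

theorem Filter.Tendsto.outer (hf : Tendsto f l (𝓝 u)) (hg : Tendsto g l (𝓝 v)) :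
    Tendsto (fun a => outer (f a) (g a)) l (𝓝 (outer u v)) :=
  (continuous_outer.tendsto _).comp (hf.prodMk_nhds hg)

end Limits

theorem tendsto_dot_normal_div_sq {x : ℝ → ℝ × ℝ} {s₀ : ℝ} (hx : Differentiable ℝ x)
    (hx' : Differentiable ℝ (deriv x)) (hx'' : ContinuousAt (deriv (deriv x)) s₀) :
    Tendsto (fun σ => dot (x s₀ - x σ) (normal (deriv x σ)) / (σ - s₀) ^ 2) (𝓝[≠] s₀)
      (𝓝 (dot (deriv (deriv x) s₀) (normal (deriv x s₀)) / 2)) := by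
  have hF : ∀ σ, HasDerivAt (fun σ => dot (x s₀ - x σ) (normal (deriv x σ)))
      (dot (x s₀ - x σ) (normal (deriv (deriv x) σ))) σ := fun σ => by
    convert ((hx σ).hasDerivAt.const_sub (x s₀)).dot (hx' σ).hasDerivAt.normal using 1
    rw [dot_neg_left, dot_normal_self, neg_zero, zero_add]
  have hG : ∀ σ, HasDerivAt (fun σ => (σ - s₀) ^ 2) (2 * (σ - s₀)) σ := fun σ => by
    simpa using ((hasDerivAt_id σ).sub_const s₀).fun_pow 2
  have hslope := hasDerivAt_iff_tendsto_slope.mp (hx s₀).hasDerivAt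
  have hratio : Tendsto (fun σ => -dot (slope x s₀ σ) (normal (deriv (deriv x) σ)) / 2)
      (𝓝[≠] s₀) (𝓝 (dot (deriv (deriv x) s₀) (normal (deriv x s₀)) / 2)) := by
    rw [dot_normal_comm]
    exact ((hslope.dot (hx''.tendsto.mono_left nhdsWithin_le_nhds).normal).neg).div_const 2
  refine HasDerivAt.lhopital_zero_nhdsNE (.of_forall hF) (.of_forall hG) ?_ ?_ ?_
    (hratio.congr' ?_)
  · filter_upwards [self_mem_nhdsWithin] with σ hσ
    exact mul_ne_zero two_ne_zero (sub_ne_zero.mpr hσ)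
  · simpa [PlaneCurve.dot] using (hF s₀).continuousAt.tendsto.mono_left nhdsWithin_le_nhds
  · simpa using (hG s₀).continuousAt.tendsto.mono_left nhdsWithin_le_nhds
  · filter_upwards [self_mem_nhdsWithin] with σ hσ
    rw [sub_eq_smul_slope, dot_smul_left]
    field_simp [sub_ne_zero.mpr hσ]
    ring

theorem dlKernel_eq (x : ℝ → ℝ × ℝ) (p : ℝ × ℝ) (σ : ℝ) :
    dlKernel x p σ =
      (1 / π * (dot (p - x σ) (normal (deriv x σ)) / dot (p - x σ) (p - x σ)) *
        (1 / dot (p - x σ) (p - x σ))) • outer (p - x σ) (p - x σ) := by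
  simp only [dlKernel, dot, normal, outer, Prod.fst_sub, Prod.snd_sub, sq]

theorem dlKernel_self_eq_slope {x : ℝ → ℝ × ℝ} {s₀ σ : ℝ} (hσ : σ ≠ s₀) :
    dlKernel x (x s₀) σ =
      (1 / π * (dot (x s₀ - x σ) (normal (deriv x σ)) / (σ - s₀) ^ 2) /
        dot (slope x s₀ σ) (slope x s₀ σ) ^ 2) • outer (slope x s₀ σ) (slope x s₀ σ) := by
  have hh : σ - s₀ ≠ 0 := sub_ne_zero.mpr hσ
  rw [dlKernel_eq, sub_eq_smul_slope]
  simp only [dot_smul_left, dot_smul_right, outer_smul_smul, smul_smul]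
  congr 1
  rcases eq_or_ne (dot (slope x s₀ σ) (slope x s₀ σ)) 0 with hD | hD
  · -- both sides are junk values `_ / 0 = 0`
    simp [hD]
  · field_simp
    ring

/-- For a `C²` arclength-parametrized plane curve `x` with unit tangent `t = x'`,
unit normal `n = (x'₂, −x'₁)`, and signed curvature `κ(s₀) = x''(s₀)·n(s₀)`, the
Stokes double-layer kernel `K(x(s₀), σ)` tends to `(κ(s₀)/(2π)) t(s₀) ⊗ t(s₀)`
as `σ → s₀`. -/
theorem double_layer_kernel_diagonal_limit (x : ℝ → ℝ × ℝ)
    (hx : ContDiff ℝ 2 x)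
    (harc : ∀ s : ℝ, (deriv x s).1 ^ 2 + (deriv x s).2 ^ 2 = 1) (s₀ : ℝ) :
    Tendsto (fun σ : ℝ => dlKernel x (x s₀) σ)
      (nhdsWithin s₀ {s₀}ᶜ)
      (nhds ((((deriv (deriv x) s₀).1 * (deriv x s₀).2 +
            (deriv (deriv x) s₀).2 * (-(deriv x s₀).1)) / (2 * π)) •
        !![(deriv x s₀).1 * (deriv x s₀).1, (deriv x s₀).1 * (deriv x s₀).2;
           (deriv x s₀).2 * (deriv x s₀).1, (deriv x s₀).2 * (deriv x s₀).2])) := by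
  have hx' : ContDiff ℝ 1 (deriv x) := hx.deriv'
  have hslope : Tendsto (slope x s₀) (𝓝[≠] s₀) (𝓝 (deriv x s₀)) :=
    hasDerivAt_iff_tendsto_slope.mp (hx.differentiable two_ne_zero s₀).hasDerivAt
  have hnormal := tendsto_dot_normal_div_sq (s₀ := s₀) (hx.differentiable two_ne_zero)
    (hx'.differentiable one_ne_zero) (hx'.continuous_deriv le_rfl).continuousAt
  have hunit : dot (deriv x s₀) (deriv x s₀) = 1 := by simpa [dot, sq] using harc s₀
  have hlim := ((tendsto_const_nhds (x := 1 / π)).mul hnormal).div ((hslope.dot hslope).pow 2)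
    (by simp [hunit]) |>.smul (hslope.outer hslope)
  rw [hunit] at hlim
  have hK : ∀ᶠ σ in 𝓝[≠] s₀, _ = dlKernel x (x s₀) σ :=
    eventually_mem_nhdsWithin.mono fun σ hσ => (dlKernel_self_eq_slope hσ).symm
  convert hlim.congr' hK using 3
  · simp only [dot, normal]
    ring
  · rfl
end
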